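/- Let n ≥ 2 be an integer, ω₀ > 1, δ ∈ (0,1], p₀ ≥ 0, v̄ > 0, and define Φ(v) = p₀ + J̃(v)/δ − v for v ∈ [0, v̄]. Then: (i) if p₀ < v̄ − ln(n−1+ω₀)/δ, then Φ has exactly one zero in [0, v̄], and this zero lies in the open interval (0, v̄); (ii) if p₀ > v̄ − ln(n−1+ω₀)/δ, then Φ has no zero in [0, v̄]; (iii) if p₀ = v̄ − ln(n−1+ω₀)/δ, then v̄ is the unique zero of Φ in [0, v̄]. -/

import Mathlib

/-!
The benefit is a Bernstein polynomial, `J̃(v) = B(v / v̄)` with `B(x) = ∑ₘ ln(m + ω₀) bₙ₋₁,ₘ(x)`.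
Bernstein polynomials of a concave sequence are concave, because
`B'' = N (N - 1) ∑ Δ²g(ν) b_{N-2,ν}` and `m ↦ ln(m + ω₀)` has nonpositive second differences.
Hence `Φ` is concave on `[0, v̄]`, with `Φ 0 = p₀ + ln ω₀ / δ > 0` and
`Φ v̄ = p₀ - (v̄ - ln(n - 1 + ω₀) / δ)`. A concave function that is positive at `0` and
nonnegative at `b` is positive on `[0, b)`: this gives uniqueness of zeros, rules them out
before `v̄` when `Φ v̄ ≥ 0`, and the intermediate value theorem provides the zero when `Φ v̄ < 0`.
-/

open Real Finset
open scoped Polynomial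

noncomputable def Jt (n : ℕ) (ω₀ vbar : ℝ) (v : ℝ) : ℝ :=
  ∑ m ∈ Finset.range n, (Nat.choose (n - 1) m : ℝ) * Real.log ((m : ℝ) + ω₀) *
    (v / vbar) ^ m * (1 - v / vbar) ^ (n - 1 - m)

noncomputable def bernsteinSum (N : ℕ) (g : ℕ → ℝ) : ℝ[X] :=
  ∑ ν ∈ range (N + 1), g ν • bernsteinPolynomial ℝ N ν

theorem bernsteinSum_eval_zero (N : ℕ) (g : ℕ → ℝ) : (bernsteinSum N g).eval 0 = g 0 := by
  simp [bernsteinSum, Polynomial.eval_finsetSum, bernsteinPolynomial.eval_at_0]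

theorem bernsteinSum_eval_one (N : ℕ) (g : ℕ → ℝ) : (bernsteinSum N g).eval 1 = g N := by
  simp [bernsteinSum, Polynomial.eval_finsetSum, bernsteinPolynomial.eval_at_1]

theorem bernsteinSum_eval_nonpos {N : ℕ} {g : ℕ → ℝ} (hg : ∀ ν, g ν ≤ 0) {x : ℝ}
    (hx : x ∈ Set.Icc 0 1) : (bernsteinSum N g).eval x ≤ 0 := by
  simp only [bernsteinSum, bernsteinPolynomial, Polynomial.eval_finsetSum, Polynomial.eval_smul,
    Polynomial.eval_mul, Polynomial.eval_pow, Polynomial.eval_sub, Polynomial.eval_one,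
    Polynomial.eval_X, Polynomial.eval_natCast, smul_eq_mul]
  obtain ⟨hx0, hx1⟩ := hx
  have h1x : 0 ≤ 1 - x := sub_nonneg.2 hx1
  exact Finset.sum_nonpos fun ν _ => mul_nonpos_of_nonpos_of_nonneg (hg ν) (by positivity)

theorem derivative_bernsteinSum (N : ℕ) (g : ℕ → ℝ) :
    Polynomial.derivative (bernsteinSum N g) = (N : ℝ) • bernsteinSum (N - 1) (fwdDiff 1 g) := by
  cases N with
  | zero => simp [bernsteinSum, bernsteinPolynomial]
  | succ N =>
    have hshift : ∑ ν ∈ range (N + 1), g (ν + 1) • bernsteinPolynomial ℝ N (ν + 1) =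
        ∑ ν ∈ range (N + 1), g ν • bernsteinPolynomial ℝ N ν - g 0 • bernsteinPolynomial ℝ N 0 := by
      have h := Finset.sum_range_succ' (fun ν => g ν • bernsteinPolynomial ℝ N ν) (N + 1)
      rw [Finset.sum_range_succ, bernsteinPolynomial.eq_zero_of_lt ℝ N.lt_succ_self,
        smul_zero, add_zero] at h
      rw [h, add_sub_cancel_right]
    rw [bernsteinSum, map_sum, Finset.sum_range_succ']
    simp only [Polynomial.derivative_smul, bernsteinPolynomial.derivative_succ,
      bernsteinPolynomial.derivative_zero, Nat.add_sub_cancel, bernsteinSum, fwdDiff, sub_smul,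
      Finset.sum_sub_distrib]
    simp only [← nsmul_eq_mul, Nat.cast_smul_eq_nsmul, neg_mul, smul_sub, smul_neg,
      Finset.sum_sub_distrib, smul_comm (g _) (N + 1), ← Finset.smul_sum, hshift]
    module

theorem concaveOn_eval_bernsteinSum {N : ℕ} {g : ℕ → ℝ} (hg : ∀ ν, fwdDiff 1 (fwdDiff 1 g) ν ≤ 0) :
    ConcaveOn ℝ (Set.Icc 0 1) fun x => (bernsteinSum N g).eval x := by
  have hderiv (p : ℝ[X]) : deriv (fun x => p.eval x) = fun x => (Polynomial.derivative p).eval x :=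
    funext fun _ => p.deriv
  refine concaveOn_of_deriv2_nonpos' (convex_Icc 0 1) (Polynomial.differentiable _).differentiableOn
    (by rw [hderiv]; exact (Polynomial.differentiable _).differentiableOn) fun x hx => ?_
  rw [Function.iterate_succ_apply', Function.iterate_one, hderiv, hderiv, derivative_bernsteinSum,
    Polynomial.derivative_smul, derivative_bernsteinSum]
  simp only [Polynomial.eval_smul, smul_eq_mul]
  exact mul_nonpos_of_nonneg_of_nonpos (Nat.cast_nonneg _)
    (mul_nonpos_of_nonneg_of_nonpos (Nat.cast_nonneg _) (bernsteinSum_eval_nonpos hg hx))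

theorem fwdDiff_fwdDiff_log_add_nonpos {ω : ℝ} (hω : 0 < ω) (m : ℕ) :
    fwdDiff 1 (fwdDiff 1 fun m : ℕ => log (m + ω)) m ≤ 0 := by
  have hm : (0 : ℝ) < m + ω := by positivity
  have key : log ((m + ω) * (m + 1 + 1 + ω)) ≤ log ((m + 1 + ω) * (m + 1 + ω)) :=
    log_le_log (by positivity) (by nlinarith)
  rw [log_mul hm.ne' (by positivity), log_mul (by positivity) (by positivity)] at key
  simp only [fwdDiff]
  push_cast
  linarith

theorem Jt_eq_eval_bernsteinSum {n : ℕ} (hn : 1 ≤ n) (ω₀ vbar v : ℝ) :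
    Jt n ω₀ vbar v = (bernsteinSum (n - 1) fun m => log (m + ω₀)).eval (v / vbar) := by
  obtain ⟨N, rfl⟩ := Nat.exists_eq_add_of_le' hn
  simp only [Jt, add_tsub_cancel_right, bernsteinSum, bernsteinPolynomial, Polynomial.eval_finsetSum,
    Polynomial.eval_smul, Polynomial.eval_mul, Polynomial.eval_natCast, Polynomial.eval_pow,
    Polynomial.eval_X, Polynomial.eval_sub, Polynomial.eval_one, smul_eq_mul]
  exact Finset.sum_congr rfl fun _ _ => by ring

theorem Jt_zero {n : ℕ} (hn : 1 ≤ n) (ω₀ vbar : ℝ) : Jt n ω₀ vbar 0 = log ω₀ := by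
  rw [Jt_eq_eval_bernsteinSum hn, zero_div, bernsteinSum_eval_zero, Nat.cast_zero, zero_add]

theorem Jt_self {n : ℕ} (hn : 1 ≤ n) (ω₀ : ℝ) {vbar : ℝ} (hv : vbar ≠ 0) :
    Jt n ω₀ vbar vbar = log (n - 1 + ω₀) := by
  rw [Jt_eq_eval_bernsteinSum hn, div_self hv, bernsteinSum_eval_one, Nat.cast_sub hn, Nat.cast_one]

theorem concaveOn_Jt {n : ℕ} (hn : 1 ≤ n) {ω₀ vbar : ℝ} (hω : 0 < ω₀) (hv : 0 < vbar) :
    ConcaveOn ℝ (Set.Icc 0 vbar) (Jt n ω₀ vbar) := by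
  have h := (concaveOn_eval_bernsteinSum (N := n - 1)
    (fwdDiff_fwdDiff_log_add_nonpos hω)).comp_linearMap (vbar⁻¹ • LinearMap.id)
  have hpre : (vbar⁻¹ • LinearMap.id : ℝ →ₗ[ℝ] ℝ) ⁻¹' Set.Icc 0 1 = Set.Icc 0 vbar := by
    ext v
    simp [inv_mul_le_one₀ hv, mul_nonneg_iff_of_pos_left (inv_pos.2 hv)]
  rw [hpre] at h
  exact h.congr fun v _ => by simp [Jt_eq_eval_bernsteinSum hn, div_eq_inv_mul]

theorem ConcaveOn.pos_of_mem_Ico {𝕜 : Type*} [Field 𝕜] [LinearOrder 𝕜] [IsStrictOrderedRing 𝕜]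
    {s : Set 𝕜} {f : 𝕜 → 𝕜} (hf : ConcaveOn 𝕜 s f) {a b x : 𝕜}
    (ha : a ∈ s) (hb : b ∈ s) (hfa : 0 < f a) (hfb : 0 ≤ f b) (hx : x ∈ Set.Ico a b) : 0 < f x := by
  obtain rfl | hax := hx.1.eq_or_lt
  · exact hfa
  by_contra! hfx
  have := hf.lt_right_of_left_lt ha hb (Ioo_subset_openSegment ⟨hax, hx.2⟩) (hfx.trans_lt hfa)
  exact (hfb.trans_lt this).not_ge hfx

theorem ConcaveOn.existsUnique_zero {f : ℝ → ℝ} {a b : ℝ} (hf : ConcaveOn ℝ (Set.Icc a b) f)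
    (hcont : ContinuousOn f (Set.Icc a b)) (hab : a ≤ b) (hfa : 0 < f a) (hfb : f b < 0) :
    ∃! x, x ∈ Set.Icc a b ∧ f x = 0 := by
  obtain ⟨x, hx, hfx⟩ := intermediate_value_Icc' hab hcont ⟨hfb.le, hfa.le⟩
  refine ⟨x, ⟨hx, hfx⟩, fun y ⟨hy, hfy⟩ => ?_⟩
  have ha : a ∈ Set.Icc a b := Set.left_mem_Icc.2 hab
  by_contra! hyx
  rcases hyx.lt_or_gt with hlt | hlt
  · exact (hf.pos_of_mem_Ico ha hx hfa hfx.ge ⟨hy.1, hlt⟩).ne' hfy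
  · exact (hf.pos_of_mem_Ico ha hy hfa hfy.ge ⟨hx.1, hlt⟩).ne' hfx

/-- Zeros of `Φ(v) = p₀ + J̃(v)/δ − v` on `[0, v̄]`:
(i) if `p₀ < v̄ − ln(n−1+ω₀)/δ` there is exactly one zero, lying in `(0, v̄)`;
(ii) if `p₀ > v̄ − ln(n−1+ω₀)/δ` there is no zero;
(iii) if `p₀ = v̄ − ln(n−1+ω₀)/δ` then `v̄` is the unique zero. -/
theorem stmt5 (n : ℕ) (hn : 2 ≤ n) (ω₀ δ p₀ vbar : ℝ) (hω : 1 < ω₀)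
    (hδ : δ ∈ Set.Ioc (0 : ℝ) 1) (hp : 0 ≤ p₀) (hv : 0 < vbar) :
    (p₀ < vbar - Real.log ((n : ℝ) - 1 + ω₀) / δ →
      (∃! v, v ∈ Set.Icc (0 : ℝ) vbar ∧ p₀ + Jt n ω₀ vbar v / δ - v = 0) ∧
      ∀ v ∈ Set.Icc (0 : ℝ) vbar, p₀ + Jt n ω₀ vbar v / δ - v = 0 →
        v ∈ Set.Ioo (0 : ℝ) vbar) ∧
    (vbar - Real.log ((n : ℝ) - 1 + ω₀) / δ < p₀ →
      ∀ v ∈ Set.Icc (0 : ℝ) vbar, p₀ + Jt n ω₀ vbar v / δ - v ≠ 0) ∧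
    (p₀ = vbar - Real.log ((n : ℝ) - 1 + ω₀) / δ →
      ∀ v ∈ Set.Icc (0 : ℝ) vbar, (p₀ + Jt n ω₀ vbar v / δ - v = 0 ↔ v = vbar)) := by
  obtain ⟨hδ0, -⟩ := hδ
  have hn1 : 1 ≤ n := by omega
  let Φ : ℝ → ℝ := fun v => p₀ + Jt n ω₀ vbar v / δ - v
  have hconc : ConcaveOn ℝ (Set.Icc 0 vbar) Φ :=
    ((((concaveOn_Jt hn1 (zero_lt_one.trans hω) hv).smul (inv_nonneg.2 hδ0.le)).add_const p₀).sub
      (convexOn_id (convex_Icc 0 vbar))).congr fun v _ => by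
        simp only [Φ, Pi.sub_apply, Pi.add_apply, smul_eq_mul, id]; ring
  have hcont : Continuous Φ := by simp only [Φ, Jt]; fun_prop
  have h0 : (0 : ℝ) ∈ Set.Icc 0 vbar := Set.left_mem_Icc.2 hv.le
  have hvbar : vbar ∈ Set.Icc 0 vbar := Set.right_mem_Icc.2 hv.le
  have hΦ0 : 0 < Φ 0 := by
    have := div_pos (log_pos hω) hδ0
    simp only [Φ, Jt_zero hn1]; linarith
  have hΦvbar : Φ vbar = p₀ - (vbar - log (n - 1 + ω₀) / δ) := by
    simp only [Φ, Jt_self hn1 ω₀ hv.ne']; ring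
  refine ⟨fun hlt => ?_, fun hgt v hv' => ?_, fun heq v hv' => ?_⟩
  · have hneg : Φ vbar < 0 := by rw [hΦvbar]; linarith
    refine ⟨hconc.existsUnique_zero hcont.continuousOn hv.le hΦ0 hneg, fun v hv' hzero => ⟨?_, ?_⟩⟩
    · exact hv'.1.lt_of_ne (by rintro rfl; exact hΦ0.ne' hzero)
    · exact hv'.2.lt_of_ne (by rintro rfl; exact hneg.ne hzero)
  · have hpos : 0 < Φ vbar := by rw [hΦvbar]; linarith
    obtain hlt | rfl := hv'.2.lt_or_eq
    · exact (hconc.pos_of_mem_Ico h0 hvbar hΦ0 hpos.le ⟨hv'.1, hlt⟩).ne'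
    · exact hpos.ne'
  · have hzero : Φ vbar = 0 := by rw [hΦvbar]; linarith
    refine ⟨fun hΦv => ?_, fun h => by rw [h]; exact hzero⟩
    by_contra hne
    exact (hconc.pos_of_mem_Ico h0 hvbar hΦ0 hzero.ge ⟨hv'.1, hv'.2.lt_of_ne hne⟩).ne' hΦv
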